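/- Let P ⊆ ℝ^N be a polytope presented by half-spaces contained in the unit ball {x : |x|₂ ≤ 1}, and let H : ℝ^N → ℝ be (ε,δ)-superb for P and satisfy the C-derivative bounds, for some ε, δ, C > 0. Then for every x ∈ P which is not an ε-corner of P and every x⁰ ∈ P there exists a nonzero vector v ∈ ℝ^N with ⟨v,x⟩ = 0 and ⟨v,x⁰⟩ = 0 such that: (1) x + v ∈ P; (2) J(x) ⊆ J(x+v), i.e. x + v lies in every face of P whose minimal face contains x; (3) H(x+v) − H(x) ≥ (ζ(|x|₂²)·√ε − δ)·|v|₂²; (4) |v|₂ ≤ δ/(10C); and (5) either |v|₂ = δ/(10C) or dim U(x+v) < dim U(x). -/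

import Mathlib

/-- Second derivative `ξ''(t) = ∑_{p=1}^P γ_p² p(p-1) t^{p-2}` of the mixture function. -/
noncomputable def xiSecond (Pd : ℕ) (γ : ℕ → ℝ) (t : ℝ) : ℝ :=
  ∑ p ∈ Finset.Icc 1 Pd, (γ p) ^ 2 * ((p : ℝ) * ((p : ℝ) - 1)) * t ^ (p - 2)

/-- `ζ(t) = √(ξ''(t))`. -/
noncomputable def zeta (Pd : ℕ) (γ : ℕ → ℝ) (t : ℝ) : ℝ :=
  Real.sqrt (xiSecond Pd γ t)

/-- The normalized inner product `⟨a,·⟩ = (∑ i, a i * v i)/N` as a linear functional. -/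
noncomputable def dotL {N : ℕ} (a : Fin N → ℝ) : (Fin N → ℝ) →ₗ[ℝ] ℝ where
  toFun v := (∑ i, a i * v i) / N
  map_add' v w := by
    simp [Pi.add_apply, mul_add, Finset.sum_add_distrib, add_div]
  map_smul' c v := by
    simp only [Pi.smul_apply, smul_eq_mul, RingHom.id_apply]
    rw [show (∑ x : Fin N, a x * (c * v x)) = c * ∑ i, a i * v i by
      rw [Finset.mul_sum]; exact Finset.sum_congr rfl fun i _ => by ring]
    ring

/-- The polytope `{x : ⟨a_j, x⟩ ≤ b_j for all j}` presented by half-spaces. -/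
def Pset {N : ℕ} {J : Type*} (a : J → Fin N → ℝ) (b : J → ℝ) : Set (Fin N → ℝ) :=
  {x | ∀ j, dotL (a j) x ≤ b j}

/-- `U(x)`: the tangent space of the minimal face of the polytope containing `x`, i.e. the
intersection of the kernels of the constraints active at `x`. -/
noncomputable def Uspace {N : ℕ} {J : Type*} (a : J → Fin N → ℝ) (b : J → ℝ)
    (x : Fin N → ℝ) : Submodule ℝ (Fin N → ℝ) :=
  ⨅ j ∈ {j | dotL (a j) x = b j}, LinearMap.ker (dotL (a j))

/-- `H` is `(ε,δ)`-superb for the polytope: for every `x` in the polytope and every `y` in the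
polytope with `dim U(y) ≥ εN` there is a 2-dimensional subspace `V ⊆ U(y) ∩ x^⊥` on which the
(normalized) Hessian quadratic form at `x` is at least `2ζ(|x|₂²)√ε − δ`. -/
def IsSuperb {N : ℕ} {J : Type*} [Fintype J] (Pd : ℕ) (γ : ℕ → ℝ) (ε δ : ℝ)
    (a : J → Fin N → ℝ) (b : J → ℝ) (H : (Fin N → ℝ) → ℝ) : Prop :=
  ∀ x ∈ Pset a b, ∀ y ∈ Pset a b,
    ε * N ≤ (Module.finrank ℝ (Uspace a b y) : ℝ) →
    ∃ V : Submodule ℝ (Fin N → ℝ), Module.finrank ℝ V = 2 ∧ V ≤ Uspace a b y ∧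
      (∀ w ∈ V, (∑ i, w i * x i) = 0) ∧
      ∀ w ∈ V, (2 * zeta Pd γ ((∑ i, (x i) ^ 2) / N) * Real.sqrt ε - δ) * (∑ i, (w i) ^ 2) ≤
        (N : ℝ) * iteratedFDeriv ℝ 2 H x ![w, w]

/-- `H` satisfies the `C`-derivative bounds: it is three times continuously differentiable and
its directional derivatives of orders 1, 2, 3 along unit directions (in the normalized norm)
are bounded by `C` on the unit ball. -/
def DerivBounds (N : ℕ) (C : ℝ) (H : (Fin N → ℝ) → ℝ) : Prop :=
  ContDiff ℝ 3 H ∧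
  ∀ σ : Fin N → ℝ, (∑ i, (σ i) ^ 2) / N ≤ 1 →
    ∀ v : Fin N → ℝ, (∑ i, (v i) ^ 2) = (N : ℝ) →
      |fderiv ℝ H σ v| ≤ C ∧ |iteratedFDeriv ℝ 2 H σ ![v, v]| ≤ C ∧
        |iteratedFDeriv ℝ 3 H σ ![v, v, v]| ≤ C

/-!
Since `x` is not an `ε`-corner, superbness at `(x, x)` gives a plane `V ⊆ U(x) ∩ x^⊥` on which
the Hessian of `H` is at least `2ζ√ε − δ`. The plane meets `x⁰^⊥` in a line; take a unit
vector `u` on it, with the sign chosen so that `∇H(x)·u ≥ 0`. Since `u ∈ U(x)`, the constraints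
active at `x` stay active along `x + t u`; walk until `t = δ/(10C)` or until a new constraint
becomes active, which shrinks `U`. Taylor's formula with the third derivative bounded by `C`
then gives `H(x + t u) − H(x) ≥ (ζ√ε − δ/2 − Ct/6) t² ≥ (ζ√ε − δ) t²`.
-/

open Set

section Taylor

variable {E F : Type*} [NormedAddCommGroup E] [NormedSpace ℝ E]
  [NormedAddCommGroup F] [NormedSpace ℝ F]

theorem iteratedDeriv_comp_add_smul {n : WithTop ℕ∞} {f : E → F} (hf : ContDiff ℝ n f)
    (x w : E) (s : ℝ) {i : ℕ} (hi : i ≤ n) :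
    iteratedDeriv i (fun s : ℝ => f (x + s • w)) s =
      iteratedFDeriv ℝ i f (x + s • w) (fun _ => w) := by
  have hshift : ContDiff ℝ n (fun z => f (x + z)) := hf.comp (contDiff_const.add contDiff_id)
  have hcomp := (ContinuousLinearMap.toSpanSingleton ℝ w).iteratedFDeriv_comp_right hshift s hi
  simp only [Function.comp_def, ContinuousLinearMap.toSpanSingleton_apply] at hcomp
  rw [iteratedDeriv_eq_iteratedFDeriv, hcomp, ContinuousMultilinearMap.compContinuousLinearMap_apply,
    iteratedFDeriv_comp_add_left]
  simp

theorem le_of_contDiff_three_of_le_iteratedDeriv_three {f : ℝ → ℝ} (hf : ContDiff ℝ 3 f)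
    {t C : ℝ} (ht : 0 ≤ t) (h3 : ∀ s ∈ Icc 0 t, -C ≤ iteratedDeriv 3 f s) :
    f 0 + iteratedDeriv 1 f 0 * t + iteratedDeriv 2 f 0 * t ^ 2 / 2 - C * t ^ 3 / 6 ≤ f t := by
  rcases ht.eq_or_lt with rfl | ht
  · simp
  obtain ⟨s, hs, hrem⟩ :=
    taylor_mean_remainder_lagrange_iteratedDeriv (n := 2) ht.ne hf.contDiffOn
  have hwithin : ∀ k ≤ 2, iteratedDerivWithin k f (uIcc 0 t) 0 = iteratedDeriv k f 0 :=
    fun k hk => iteratedDerivWithin_eq_iteratedDeriv (uniqueDiffOn_uIcc ht.ne)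
      (hf.contDiffAt.of_le (by exact_mod_cast hk.trans (by norm_num))) left_mem_uIcc
  rw [taylor_within_apply] at hrem
  simp only [Finset.sum_range_succ, Finset.sum_range_zero, hwithin 0 (by norm_num),
    hwithin 1 (by norm_num), hwithin 2 le_rfl] at hrem
  rw [uIoo_of_le ht.le] at hs
  norm_num [Nat.factorial] at hrem
  rw [iteratedDeriv_one]
  nlinarith [h3 s (Ioo_subset_Icc_self hs), pow_pos ht 3]

theorem le_sub_of_contDiff_three {H : E → ℝ} (hH : ContDiff ℝ 3 H) {x u : E} {t κ C : ℝ}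
    (ht : 0 ≤ t) (h1 : 0 ≤ fderiv ℝ H x u) (h2 : κ ≤ iteratedFDeriv ℝ 2 H x (fun _ => u))
    (h3 : ∀ s ∈ Icc 0 t, -C ≤ iteratedFDeriv ℝ 3 H (x + s • u) (fun _ => u)) :
    (κ / 2 - C * t / 6) * t ^ 2 ≤ H (x + t • u) - H x := by
  have hline (i : ℕ) (hi : i ≤ 3) (s : ℝ) := iteratedDeriv_comp_add_smul hH x u s
    (i := i) (by exact_mod_cast hi)
  have htaylor := le_of_contDiff_three_of_le_iteratedDeriv_three (f := fun s => H (x + s • u))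
    (hH.comp (contDiff_const.add (contDiff_id.smul contDiff_const))) ht
    (fun s hs => (hline 3 le_rfl s).symm ▸ h3 s hs)
  simp only [hline 1 (by norm_num), hline 2 (by norm_num), iteratedFDeriv_one_apply, zero_smul,
    add_zero] at htaylor
  nlinarith [mul_le_mul_of_nonneg_right h2 (sq_nonneg t), mul_nonneg h1 ht]

end Taylor

section LinearAlgebra

theorem Submodule.exists_ne_zero_mem_ker {K E : Type*} [Field K] [AddCommGroup E] [Module K E]
    {W : Submodule K E} [FiniteDimensional K W] (hW : 1 < Module.finrank K W)
    (f : E →ₗ[K] K) : ∃ w ∈ W, w ≠ 0 ∧ f w = 0 := by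
  have hker : LinearMap.ker (f ∘ₗ W.subtype) ≠ ⊥ :=
    LinearMap.ker_ne_bot_of_finrank_lt (by rwa [Module.finrank_self])
  obtain ⟨w, hw, hw0⟩ := Submodule.exists_mem_ne_zero_of_ne_bot hker
  exact ⟨w, w.2, by simpa using hw0, hw⟩

variable {N : ℕ}

theorem sum_smul_mul (c : ℝ) (z y : Fin N → ℝ) :
    ∑ i, (c • z) i * y i = c * ∑ i, z i * y i := by
  simp only [Finset.mul_sum, Pi.smul_apply, smul_eq_mul, mul_assoc]

theorem sum_smul_sq (c : ℝ) (z : Fin N → ℝ) :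
    ∑ i, ((c • z) i) ^ 2 = c ^ 2 * ∑ i, (z i) ^ 2 := by
  simp only [Finset.mul_sum, Pi.smul_apply, smul_eq_mul, mul_pow]

theorem dotL_eq_zero_iff (a v : Fin N → ℝ) : dotL a v = 0 ↔ ∑ i, v i * a i = 0 := by
  rcases N.eq_zero_or_pos with rfl | hN
  · simp [dotL]
  simp [dotL, hN.ne', mul_comm]

theorem sum_smul_sq_div {u : Fin N → ℝ} (hu : ∑ i, (u i) ^ 2 = N) (hu0 : u ≠ 0) (t : ℝ) :
    (∑ i, ((t • u) i) ^ 2) / N = t ^ 2 := by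
  rcases N.eq_zero_or_pos with rfl | hN
  · exact absurd (Subsingleton.elim _ _) hu0
  rw [sum_smul_sq, hu, mul_div_cancel_right₀ _ (by positivity)]

theorem exists_sum_sq_eq_nonneg {W : Submodule ℝ (Fin N → ℝ)} {w : Fin N → ℝ} (hw : w ∈ W)
    (hw0 : w ≠ 0) (L : (Fin N → ℝ) →L[ℝ] ℝ) :
    ∃ u ∈ W, u ≠ 0 ∧ ∑ i, (u i) ^ 2 = N ∧ 0 ≤ L u := by
  obtain ⟨i₀, hi₀⟩ := Function.ne_iff.1 hw0
  have hQ : 0 < ∑ i, (w i) ^ 2 :=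
    Finset.sum_pos' (fun i _ => sq_nonneg _) ⟨i₀, Finset.mem_univ _, pow_two_pos_of_ne_zero hi₀⟩
  have hN : (0 : ℝ) < N := by exact_mod_cast i₀.pos
  set c := Real.sqrt (N / ∑ i, (w i) ^ 2)
  have hc : 0 < c := Real.sqrt_pos.2 (by positivity)
  have hnorm (σ : ℝ) (hσ : σ ^ 2 = 1) : ∑ i, ((σ * c) • w) i ^ 2 = N := by
    rw [sum_smul_sq, mul_pow, hσ, one_mul, Real.sq_sqrt (by positivity), div_mul_cancel₀ _ hQ.ne']
  rcases le_total 0 (L (c • w)) with hL | hL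
  · refine ⟨c • w, W.smul_mem c hw, smul_ne_zero hc.ne' hw0, ?_, hL⟩
    simpa using hnorm 1 (by norm_num)
  · refine ⟨(-c) • w, W.smul_mem _ hw, smul_ne_zero (by linarith) hw0, ?_, ?_⟩
    · simpa using hnorm (-1) (by norm_num)
    · simpa [neg_smul] using hL

end LinearAlgebra

section Polytope

variable {N : ℕ} {J : Type*} {a : J → Fin N → ℝ} {b : J → ℝ} {x u : Fin N → ℝ}

theorem mem_Uspace_iff {z : Fin N → ℝ} :
    z ∈ Uspace a b x ↔ ∀ j, dotL (a j) x = b j → dotL (a j) z = 0 := by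
  simp [Uspace, Submodule.mem_iInf]

theorem Uspace_anti {y : Fin N → ℝ} (h : ∀ j, dotL (a j) x = b j → dotL (a j) y = b j) :
    Uspace a b y ≤ Uspace a b x :=
  fun _ hz => mem_Uspace_iff.2 fun j hj => mem_Uspace_iff.1 hz j (h j hj)

theorem dotL_add_smul_of_mem_Uspace (hu : u ∈ Uspace a b x) {j : J} (hj : dotL (a j) x = b j)
    (s : ℝ) : dotL (a j) (x + s • u) = b j := by
  rw [map_add, map_smul, mem_Uspace_iff.1 hu j hj, smul_zero, add_zero, hj]

theorem finrank_Uspace_add_smul_lt (hu : u ∈ Uspace a b x) {s : ℝ} {j : J}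
    (hj : dotL (a j) (x + s • u) = b j) (hju : dotL (a j) u ≠ 0) :
    Module.finrank ℝ (Uspace a b (x + s • u)) < Module.finrank ℝ (Uspace a b x) := by
  refine Submodule.finrank_lt_finrank_of_lt (lt_of_le_of_ne
    (Uspace_anti fun _ hi => dotL_add_smul_of_mem_Uspace hu hi s) fun h => hju ?_)
  exact mem_Uspace_iff.1 (h ▸ hu) j hj

theorem add_smul_mem_Pset (hx : x ∈ Pset a b) {s : ℝ} (hs : 0 ≤ s)
    (h : ∀ j, 0 < dotL (a j) u → s * dotL (a j) u ≤ b j - dotL (a j) x) :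
    x + s • u ∈ Pset a b := by
  intro j
  rw [map_add, map_smul, smul_eq_mul]
  rcases lt_or_ge 0 (dotL (a j) u) with hju | hju
  · linarith [h j hju]
  · nlinarith [hx j]

theorem exists_step_to_face [Fintype J] (hx : x ∈ Pset a b) (hu : u ∈ Uspace a b x) {r : ℝ}
    (hr : 0 < r) :
    ∃ t, 0 < t ∧ t ≤ r ∧ (∀ s ∈ Icc 0 t, x + s • u ∈ Pset a b) ∧
      (t = r ∨ Module.finrank ℝ (Uspace a b (x + t • u)) < Module.finrank ℝ (Uspace a b x)) := by
  classical
  set S := Finset.univ.filter fun j => 0 < dotL (a j) u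
  set ratio := fun j => (b j - dotL (a j) x) / dotL (a j) u
  have hratio : ∀ j ∈ S, 0 < ratio j := by
    intro j hj
    have hju := (Finset.mem_filter.1 hj).2
    have hslack : dotL (a j) x < b j := (hx j).lt_of_ne fun hact =>
      hju.ne' (mem_Uspace_iff.1 hu j hact)
    exact div_pos (by linarith) hju
  set T := insert r (S.image ratio)
  refine ⟨T.min' (Finset.insert_nonempty _ _), ?_, T.min'_le _ (Finset.mem_insert_self _ _), ?_, ?_⟩
  · rw [Finset.lt_min'_iff]
    simp only [T, Finset.mem_insert, Finset.mem_image]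
    rintro _ (rfl | ⟨j, hj, rfl⟩)
    exacts [hr, hratio j hj]
  · refine fun s hs => add_smul_mem_Pset hx hs.1 fun j hju => ?_
    have hjS : j ∈ S := Finset.mem_filter.2 ⟨Finset.mem_univ _, hju⟩
    have hst : s ≤ ratio j :=
      hs.2.trans (T.min'_le _ (Finset.mem_insert_of_mem (Finset.mem_image_of_mem _ hjS)))
    calc s * dotL (a j) u ≤ ratio j * dotL (a j) u := by gcongr
      _ = b j - dotL (a j) x := div_mul_cancel₀ _ hju.ne'
  · have hmem := T.min'_mem (Finset.insert_nonempty _ _)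
    simp only [T, Finset.mem_insert, Finset.mem_image] at hmem
    rcases hmem with ht | ⟨j, hj, ht⟩
    · exact Or.inl ht
    · have hju := (Finset.mem_filter.1 hj).2
      refine Or.inr (finrank_Uspace_add_smul_lt hu ?_ hju.ne')
      rw [← ht, map_add, map_smul, smul_eq_mul, div_mul_cancel₀ _ hju.ne']
      ring

end Polytope

theorem polytope_increment_step_general
    (N Pd : ℕ) (γ : ℕ → ℝ)
    (ε δ C : ℝ) (hδ : 0 < δ) (hC : 0 < C)
    (J : Type) [Fintype J] (a : J → Fin N → ℝ) (b : J → ℝ)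
    (hball : Pset a b ⊆ {x : Fin N → ℝ | (∑ i, (x i) ^ 2) / N ≤ 1})
    (H : (Fin N → ℝ) → ℝ) (hsuperb : IsSuperb Pd γ ε δ a b H) (hbd : DerivBounds N C H)
    (x : Fin N → ℝ) (hx : x ∈ Pset a b)
    (hnotcorner : ε * N ≤ (Module.finrank ℝ (Uspace a b x) : ℝ))
    (x0 : Fin N → ℝ) :
    ∃ v : Fin N → ℝ, v ≠ 0 ∧ (∑ i, v i * x i) = 0 ∧ (∑ i, v i * x0 i) = 0 ∧
      x + v ∈ Pset a b ∧
      (∀ j, dotL (a j) x = b j → dotL (a j) (x + v) = b j) ∧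
      (zeta Pd γ ((∑ i, (x i) ^ 2) / N) * Real.sqrt ε - δ) * ((∑ i, (v i) ^ 2) / N) ≤
        H (x + v) - H x ∧
      Real.sqrt ((∑ i, (v i) ^ 2) / N) ≤ δ / (10 * C) ∧
      (Real.sqrt ((∑ i, (v i) ^ 2) / N) = δ / (10 * C) ∨
        Module.finrank ℝ (Uspace a b (x + v)) < Module.finrank ℝ (Uspace a b x)) := by
  obtain ⟨V, hV2, hVU, hVx, hVhess⟩ := hsuperb x hx x hx hnotcorner
  obtain ⟨w, hwV, hw0, hwx0⟩ := V.exists_ne_zero_mem_ker (by omega) (dotL x0)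
  obtain ⟨u, ⟨huV, hux0⟩, hu0, hu2, hgrad⟩ :=
    exists_sum_sq_eq_nonneg (W := V ⊓ LinearMap.ker (dotL x0)) ⟨hwV, hwx0⟩ hw0 (fderiv ℝ H x)
  have hN : (0 : ℝ) < N := by
    obtain ⟨i, -⟩ := Function.ne_iff.1 hu0
    exact_mod_cast i.pos
  have hhess : 2 * zeta Pd γ ((∑ i, (x i) ^ 2) / N) * Real.sqrt ε - δ ≤
      iteratedFDeriv ℝ 2 H x (fun _ => u) := by
    have h := hVhess u huV
    rw [hu2, Matrix.vec_single_eq_const, Matrix.vecCons_const, mul_comm] at h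
    exact le_of_mul_le_mul_left h hN
  obtain ⟨t, ht0, htr, hfeas, hface⟩ := exists_step_to_face hx (hVU huV) (r := δ / (10 * C))
    (by positivity)
  have hthird (s : ℝ) (hs : s ∈ Icc 0 t) : -C ≤ iteratedFDeriv ℝ 3 H (x + s • u) (fun _ => u) := by
    have h := (hbd.2 _ (hball (hfeas s hs)) u hu2).2.2
    rw [Matrix.vec_single_eq_const, Matrix.vecCons_const, Matrix.vecCons_const] at h
    exact neg_le_of_abs_le h
  have hgain := le_sub_of_contDiff_three hbd.1 ht0.le hgrad hhess hthird
  have hCt : C * t ≤ δ / 10 :=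
    calc C * t ≤ C * (δ / (10 * C)) := by gcongr
      _ = δ / 10 := by field_simp
  refine ⟨t • u, smul_ne_zero ht0.ne' hu0, by rw [sum_smul_mul, hVx u huV, mul_zero],
    by rw [sum_smul_mul, (dotL_eq_zero_iff _ _).1 hux0, mul_zero], hfeas t ⟨ht0.le, le_rfl⟩,
    fun j hj => dotL_add_smul_of_mem_Uspace (hVU huV) hj t, ?_, ?_, ?_⟩ <;>
    simp only [sum_smul_sq_div hu2 hu0, Real.sqrt_sq ht0.le]
  · nlinarith [sq_nonneg t]
  exacts [htr, hface]

/-- Lemma 7 of the paper: from any point of the polytope which is not an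
`ε`-corner, an `(ε,δ)`-superb Hamiltonian with `C`-derivative bounds admits an improvement
step `v` orthogonal to both `x` and a given reference point `x⁰`. -/
theorem polytope_increment_step
    (N Pd : ℕ) (γ : ℕ → ℝ) (hγ : ∀ p, 0 ≤ γ p)
    (hmix : ∃ p, 2 ≤ p ∧ p ≤ Pd ∧ 0 < γ p)
    (ε δ C : ℝ) (hε : 0 < ε) (hδ : 0 < δ) (hC : 0 < C)
    (J : Type) [Fintype J] (a : J → Fin N → ℝ) (b : J → ℝ)
    (hball : Pset a b ⊆ {x : Fin N → ℝ | (∑ i, (x i) ^ 2) / N ≤ 1})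
    (H : (Fin N → ℝ) → ℝ) (hsuperb : IsSuperb Pd γ ε δ a b H) (hbd : DerivBounds N C H)
    (x : Fin N → ℝ) (hx : x ∈ Pset a b)
    (hnotcorner : ε * N ≤ (Module.finrank ℝ (Uspace a b x) : ℝ))
    (x0 : Fin N → ℝ) (hx0 : x0 ∈ Pset a b) :
    ∃ v : Fin N → ℝ, v ≠ 0 ∧ (∑ i, v i * x i) = 0 ∧ (∑ i, v i * x0 i) = 0 ∧
      x + v ∈ Pset a b ∧
      (∀ j, dotL (a j) x = b j → dotL (a j) (x + v) = b j) ∧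
      (zeta Pd γ ((∑ i, (x i) ^ 2) / N) * Real.sqrt ε - δ) * ((∑ i, (v i) ^ 2) / N) ≤
        H (x + v) - H x ∧
      Real.sqrt ((∑ i, (v i) ^ 2) / N) ≤ δ / (10 * C) ∧
      (Real.sqrt ((∑ i, (v i) ^ 2) / N) = δ / (10 * C) ∨
        Module.finrank ℝ (Uspace a b (x + v)) < Module.finrank ℝ (Uspace a b x)) :=
  polytope_increment_step_general N Pd γ ε δ C hδ hC J a b hball H hsuperb hbd x hx hnotcorner x0
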